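/- arXiv:2507.19297 — 2 statements merged into one kernel-verified Lean document; each statement's English description precedes it below -/
import Mathlib

section
/- Let Ω ⊂ ℝ be a bounded interval, σ, l > 0, and ν, ζ, η ∈ H¹(Ω) with ζ vanishing at one endpoint of Ω. Then there exist constants C₂, C₃ > 0 (independent of ν, ζ, η) such that ‖σ(η' − lν + ζ²/2)‖²_{L²(Ω)} ≥ C₂‖η' − lν‖²_{L²(Ω)} − C₃‖ζ'‖⁴_{L²(Ω)}. -/
open MeasureTheory Set intervalIntegral

lemma cs_int (c d : ℝ) (hcd : c ≤ d) (g : ℝ → ℝ) (hg : ContinuousOn g (Icc c d)) :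
    (∫ x in c..d, g x) ^ 2 ≤ (d - c) * ∫ x in c..d, (g x) ^ 2 := by
  have hgi : IntervalIntegrable g volume c d :=
    ContinuousOn.intervalIntegrable (by rw [uIcc_of_le hcd]; exact hg)
  have hg2i : IntervalIntegrable (fun x => (g x) ^ 2) volume c d :=
    ContinuousOn.intervalIntegrable (by rw [uIcc_of_le hcd]; exact hg.pow 2)
  rcases eq_or_lt_of_le hcd with rfl | hlt
  · simp
  · set A := ∫ x in c..d, g x with hA
    set B := ∫ x in c..d, (g x) ^ 2 with hB
    set t := A / (d - c) with ht
    have h1 : (0:ℝ) ≤ ∫ x in c..d, (g x - t) ^ 2 :=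
      intervalIntegral.integral_nonneg hcd (fun x _ => sq_nonneg _)
    have h2 : ∫ x in c..d, (g x - t) ^ 2 = B - 2 * t * A + t ^ 2 * (d - c) := by
      have : ∀ x, (g x - t) ^ 2 = (g x) ^ 2 - (2 * t) * g x + t ^ 2 := by intro x; ring
      simp_rw [this]
      rw [intervalIntegral.integral_add ((hg2i.sub (hgi.const_mul _))) intervalIntegrable_const,
        intervalIntegral.integral_sub hg2i (hgi.const_mul _),
        intervalIntegral.integral_const_mul, intervalIntegral.integral_const]
      simp [hA, hB]
      ring
    rw [h2, ht] at h1
    have hd : (0:ℝ) < d - c := by linarith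
    have h3 := mul_le_mul_of_nonneg_left h1 hd.le
    rw [mul_zero] at h3
    have h4 : (d - c) * (B - 2 * (A / (d - c)) * A + (A / (d - c)) ^ 2 * (d - c)) = (d - c) * B - A ^ 2 := by
      field_simp
      ring
    rw [h4] at h3
    linarith

/-- Estimate (es2): the lower bound
`‖σ(η' − lν + ζ²/2)‖² ≥ C₂‖η' − lν‖² − C₃‖ζ'‖⁴` for functions in `H¹` of a bounded
interval with `ζ` vanishing at one endpoint. -/
theorem stmt1 (a b : ℝ) (hab : a < b) (σ l : ℝ) (hσ : 0 < σ) (hl : 0 < l) :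
    ∃ C₂ > 0, ∃ C₃ > 0, ∀ ν ζ η ν' ζ' η' : ℝ → ℝ,
      (∀ x ∈ Icc a b, HasDerivAt ν (ν' x) x) → ContinuousOn ν' (Icc a b) →
      (∀ x ∈ Icc a b, HasDerivAt ζ (ζ' x) x) → ContinuousOn ζ' (Icc a b) →
      (∀ x ∈ Icc a b, HasDerivAt η (η' x) x) → ContinuousOn η' (Icc a b) →
      (ζ a = 0 ∨ ζ b = 0) →
      C₂ * (∫ x in a..b, (η' x - l * ν x) ^ 2) - C₃ * (∫ x in a..b, (ζ' x) ^ 2) ^ 2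
        ≤ ∫ x in a..b, (σ * (η' x - l * ν x + (ζ x) ^ 2 / 2)) ^ 2 := by
  have hab' : a ≤ b := hab.le
  have hba : (0:ℝ) < b - a := by linarith
  refine ⟨σ ^ 2 / 2, by positivity, σ ^ 2 * (b - a) ^ 3 / 4, by positivity, ?_⟩
  intro ν ζ η ν' ζ' η' hν hνc hζ hζc' hη hηc' h0
  -- continuity of the functions themselves
  have hζc : ContinuousOn ζ (Icc a b) := fun x hx =>
    (hζ x hx).continuousAt.continuousWithinAt
  have hνcont : ContinuousOn ν (Icc a b) := fun x hx =>
    (hν x hx).continuousAt.continuousWithinAt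
  -- abbreviations
  set w : ℝ → ℝ := fun x => η' x - l * ν x with hw
  have hwc : ContinuousOn w (Icc a b) := hηc'.sub (continuousOn_const.mul hνcont)
  set I := ∫ x in a..b, (ζ' x) ^ 2 with hI
  have hInn : (0:ℝ) ≤ I :=
    intervalIntegral.integral_nonneg hab' (fun x _ => sq_nonneg _)
  -- integrability
  have huIcc : uIcc a b = Icc a b := uIcc_of_le hab'
  have hw2i : IntervalIntegrable (fun x => (w x) ^ 2) volume a b :=
    ContinuousOn.intervalIntegrable (by rw [huIcc]; exact hwc.pow 2)
  have hζ4i : IntervalIntegrable (fun x => (ζ x) ^ 4) volume a b :=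
    ContinuousOn.intervalIntegrable (by rw [huIcc]; exact hζc.pow 4)
  have hfi : IntervalIntegrable (fun x => (σ * (w x + (ζ x) ^ 2 / 2)) ^ 2) volume a b :=
    ContinuousOn.intervalIntegrable (by
      rw [huIcc]
      exact ((continuousOn_const.mul (hwc.add ((hζc.pow 2).div_const 2))).pow 2))
  have hζ'2i : IntervalIntegrable (fun x => (ζ' x) ^ 2) volume a b :=
    ContinuousOn.intervalIntegrable (by rw [huIcc]; exact hζc'.pow 2)
  -- pointwise bound on ζ²
  have hζbd : ∀ x ∈ Icc a b, (ζ x) ^ 2 ≤ (b - a) * I := by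
    intro x hx
    obtain ⟨hax, hxb⟩ := hx
    rcases h0 with h0 | h0
    · have hsub : Icc a x ⊆ Icc a b := Icc_subset_Icc le_rfl hxb
      have hζ'i : IntervalIntegrable ζ' volume a x :=
        ContinuousOn.intervalIntegrable (by rw [uIcc_of_le hax]; exact hζc'.mono hsub)
      have hft : ζ x - ζ a = ∫ t in a..x, ζ' t :=
        (intervalIntegral.integral_eq_sub_of_hasDerivAt
          (fun t ht => hζ t (hsub (by rwa [uIcc_of_le hax] at ht))) hζ'i).symm
      have hval : ζ x = ∫ t in a..x, ζ' t := by rw [← hft, h0]; ring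
      rw [hval]
      calc (∫ t in a..x, ζ' t) ^ 2 ≤ (x - a) * ∫ t in a..x, (ζ' t) ^ 2 :=
            cs_int a x hax ζ' (hζc'.mono hsub)
        _ ≤ (b - a) * I := by
            apply mul_le_mul (by linarith)
              (intervalIntegral.integral_mono_interval le_rfl hax hxb
                (Filter.Eventually.of_forall fun t => sq_nonneg _) hζ'2i)
              (intervalIntegral.integral_nonneg hax (fun t _ => sq_nonneg _)) hba.le
    · have hsub : Icc x b ⊆ Icc a b := Icc_subset_Icc hax le_rfl
      have hζ'i : IntervalIntegrable ζ' volume x b :=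
        ContinuousOn.intervalIntegrable (by rw [uIcc_of_le hxb]; exact hζc'.mono hsub)
      have hft : ζ b - ζ x = ∫ t in x..b, ζ' t :=
        (intervalIntegral.integral_eq_sub_of_hasDerivAt
          (fun t ht => hζ t (hsub (by rwa [uIcc_of_le hxb] at ht))) hζ'i).symm
      have hval : ζ x = -(∫ t in x..b, ζ' t) := by rw [← hft, h0]; ring
      rw [hval]
      calc (-(∫ t in x..b, ζ' t)) ^ 2 = (∫ t in x..b, ζ' t) ^ 2 := by ring
        _ ≤ (b - x) * ∫ t in x..b, (ζ' t) ^ 2 := cs_int x b hxb ζ' (hζc'.mono hsub)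
        _ ≤ (b - a) * I := by
            apply mul_le_mul (by linarith)
              (intervalIntegral.integral_mono_interval hax hxb le_rfl
                (Filter.Eventually.of_forall fun t => sq_nonneg _) hζ'2i)
              (intervalIntegral.integral_nonneg hxb (fun t _ => sq_nonneg _)) hba.le
  -- bound on ∫ ζ⁴
  have hζ4 : (∫ x in a..b, (ζ x) ^ 4) ≤ (b - a) ^ 3 * I ^ 2 := by
    have h1 : (∫ x in a..b, (ζ x) ^ 4) ≤ ∫ _x in a..b, ((b - a) * I) ^ 2 := by
      apply intervalIntegral.integral_mono_on hab' hζ4i intervalIntegrable_const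
      intro x hx
      have h := hζbd x hx
      have h2 : (ζ x) ^ 4 = ((ζ x) ^ 2) ^ 2 := by ring
      rw [h2]
      exact pow_le_pow_left₀ (sq_nonneg _) h 2
    rw [intervalIntegral.integral_const, smul_eq_mul] at h1
    calc (∫ x in a..b, (ζ x) ^ 4) ≤ (b - a) * ((b - a) * I) ^ 2 := h1
      _ = (b - a) ^ 3 * I ^ 2 := by ring
  -- pointwise lower bound on the integrand
  have hkey : (∫ x in a..b, (σ ^ 2 / 2 * (w x) ^ 2 - σ ^ 2 / 4 * (ζ x) ^ 4))
      ≤ ∫ x in a..b, (σ * (w x + (ζ x) ^ 2 / 2)) ^ 2 := by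
    apply intervalIntegral.integral_mono_on hab'
      ((hw2i.const_mul _).sub (hζ4i.const_mul _)) hfi
    intro x _
    have heq : (σ * (w x + (ζ x) ^ 2)) ^ 2
        = 2 * (σ * (w x + (ζ x) ^ 2 / 2)) ^ 2 - σ ^ 2 * (w x) ^ 2 + σ ^ 2 / 2 * (ζ x) ^ 4 := by
      ring
    have hnn := sq_nonneg (σ * (w x + (ζ x) ^ 2))
    rw [heq] at hnn
    linarith
  have hsplit : (∫ x in a..b, (σ ^ 2 / 2 * (w x) ^ 2 - σ ^ 2 / 4 * (ζ x) ^ 4))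
      = σ ^ 2 / 2 * (∫ x in a..b, (w x) ^ 2) - σ ^ 2 / 4 * (∫ x in a..b, (ζ x) ^ 4) := by
    rw [intervalIntegral.integral_sub (hw2i.const_mul _) (hζ4i.const_mul _),
      intervalIntegral.integral_const_mul, intervalIntegral.integral_const_mul]
  rw [hsplit] at hkey
  have hσ2 : (0:ℝ) < σ ^ 2 := by positivity
  have : σ ^ 2 / 4 * (∫ x in a..b, (ζ x) ^ 4) ≤ σ ^ 2 * (b - a) ^ 3 / 4 * I ^ 2 := by
    nlinarith
  linarith
end

section
/- Let H₁ be the space of triples Φ = (ν, ζ, η) with ν, ζ, η ∈ H¹(0, L) and ν(0) = ζ(0) = η(0) = ν(L) = ζ(L) = η(L) = 0, equipped with the norm ‖Φ‖²_d = ‖k(ν' + ζ + lη)‖² + ‖σ(η' − lν)‖² + ‖λ ζ'‖², where k, σ, λ > 0 and l ≥ 0. Then there exists l₀ > 0 and constants c, C > 0, independent of l ∈ [0, l₀], such that c‖Φ‖²_{H¹} ≤ ‖Φ‖²_d ≤ C‖Φ‖²_{H¹} for all Φ ∈ H₁. -/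
open MeasureTheory Set

/-!
For `l ≤ 1` the upper bound holds pointwise. For the lower bound, the one-sided Poincaré inequality
`∫₀ᴸ f² ≤ L² ∫₀ᴸ f'²` (for `f 0 = 0`) controls `ν, ζ, η` by their derivatives, and `ν'`, `η'`
are recovered from the shear and axial terms up to the coupling terms `ζ + lη` and `lν`. By
Poincaré again, `l² ∫ η²` and `l² ∫ ν²` are at most `l²L²` times `∫ η'²` and `∫ ν'²`, so once
`l²L² ≤ 1/4` they are absorbed, with constants independent of `l`.
-/

theorem sq_integral_le_mul_integral_sq {a b : ℝ} (hab : a ≤ b) {g : ℝ → ℝ}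
    (hg : IntervalIntegrable g volume a b)
    (hg2 : IntervalIntegrable (fun t => g t ^ 2) volume a b) :
    (∫ t in a..b, g t) ^ 2 ≤ (b - a) * ∫ t in a..b, g t ^ 2 := by
  set I := ∫ t in a..b, g t
  set J := ∫ t in a..b, g t ^ 2
  have hvar : 0 ≤ ∫ t in a..b, ((b - a) * g t - I) ^ 2 :=
    intervalIntegral.integral_nonneg hab fun _ _ => sq_nonneg _
  have hexpand : ∫ t in a..b, ((b - a) * g t - I) ^ 2 = (b - a) * ((b - a) * J - I ^ 2) := by
    have hpt : ∀ t, ((b - a) * g t - I) ^ 2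
        = (b - a) ^ 2 * g t ^ 2 - 2 * (b - a) * I * g t + I ^ 2 := fun t => by ring
    simp_rw [hpt]
    rw [intervalIntegral.integral_add ((hg2.const_mul _).sub (hg.const_mul _))
        intervalIntegrable_const,
      intervalIntegral.integral_sub (hg2.const_mul _) (hg.const_mul _),
      intervalIntegral.integral_const_mul, intervalIntegral.integral_const_mul,
      intervalIntegral.integral_const, smul_eq_mul]
    ring
  rcases hab.eq_or_lt with rfl | hlt
  · simp [I]
  · rw [hexpand] at hvar
    nlinarith [(mul_nonneg_iff_of_pos_left (sub_pos.2 hlt)).1 hvar]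

section Poincare

variable {a b : ℝ} {f f' : ℝ → ℝ}

theorem sq_le_mul_integral_deriv_sq (hf : ∀ x ∈ Icc a b, HasDerivAt f (f' x) x)
    (hf' : ContinuousOn f' (Icc a b)) (ha : f a = 0) {x : ℝ} (hx : x ∈ Icc a b) :
    f x ^ 2 ≤ (b - a) * ∫ t in a..b, f' t ^ 2 := by
  obtain ⟨hax, hxb⟩ := hx
  have hleft : Icc a x ⊆ Icc a b := Icc_subset_Icc le_rfl hxb
  have hright : Icc x b ⊆ Icc a b := Icc_subset_Icc hax le_rfl
  have hftc : f x = ∫ t in a..x, f' t := by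
    rw [intervalIntegral.integral_eq_sub_of_hasDerivAt
      (fun t ht => hf t (hleft (uIcc_of_le hax ▸ ht)))
      ((hf'.mono hleft).intervalIntegrable_of_Icc hax), ha, sub_zero]
  have hsplit : (∫ t in a..x, f' t ^ 2) + (∫ t in x..b, f' t ^ 2) = ∫ t in a..b, f' t ^ 2 :=
    intervalIntegral.integral_add_adjacent_intervals
      (((hf'.mono hleft).pow 2).intervalIntegrable_of_Icc hax)
      (((hf'.mono hright).pow 2).intervalIntegrable_of_Icc hxb)
  have htail : 0 ≤ ∫ t in x..b, f' t ^ 2 :=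
    intervalIntegral.integral_nonneg hxb fun _ _ => sq_nonneg _
  have hhead : 0 ≤ ∫ t in a..x, f' t ^ 2 :=
    intervalIntegral.integral_nonneg hax fun _ _ => sq_nonneg _
  calc f x ^ 2 ≤ (x - a) * ∫ t in a..x, f' t ^ 2 := by
        rw [hftc]
        exact sq_integral_le_mul_integral_sq hax ((hf'.mono hleft).intervalIntegrable_of_Icc hax)
          (((hf'.mono hleft).pow 2).intervalIntegrable_of_Icc hax)
    _ ≤ (b - a) * ∫ t in a..b, f' t ^ 2 := by
        rw [← hsplit]
        exact mul_le_mul (by linarith) (by linarith) hhead (by linarith)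

theorem integral_sq_le_sq_mul_integral_deriv_sq (hab : a ≤ b)
    (hf : ∀ x ∈ Icc a b, HasDerivAt f (f' x) x) (hf' : ContinuousOn f' (Icc a b)) (ha : f a = 0) :
    ∫ x in a..b, f x ^ 2 ≤ (b - a) ^ 2 * ∫ x in a..b, f' x ^ 2 := by
  have hfc : ContinuousOn f (Icc a b) := fun x hx => (hf x hx).continuousAt.continuousWithinAt
  calc ∫ x in a..b, f x ^ 2 ≤ ∫ _ in a..b, (b - a) * ∫ t in a..b, f' t ^ 2 :=
        intervalIntegral.integral_mono_on hab ((hfc.pow 2).intervalIntegrable_of_Icc hab)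
          intervalIntegrable_const
          fun x hx => sq_le_mul_integral_deriv_sq hf hf' ha hx
    _ = (b - a) ^ 2 * ∫ x in a..b, f' x ^ 2 := by
        rw [intervalIntegral.integral_const, smul_eq_mul]; ring

end Poincare

theorem sum_le_of_coupled_poincare {L l a b n n' z z' e e' : ℝ}
    (hn : n ≤ L ^ 2 * n') (hz : z ≤ L ^ 2 * z') (he : e ≤ L ^ 2 * e')
    (hn' : n' ≤ 3 * a + 3 * z + 3 * l ^ 2 * e) (he' : e' ≤ 2 * b + 2 * l ^ 2 * n)
    (hlL : l ^ 2 * L ^ 2 ≤ 1 / 4) (ha : 0 ≤ a) (hb : 0 ≤ b) (hz' : 0 ≤ z')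
    (hn'0 : 0 ≤ n') (he'0 : 0 ≤ e') :
    n + n' + z + z' + e + e' ≤ 8 * (1 + L ^ 2) ^ 2 * (a + b + z') := by
  have hln : l ^ 2 * n ≤ n' / 4 := by
    nlinarith [mul_le_mul_of_nonneg_left hn (sq_nonneg l), mul_le_mul_of_nonneg_right hlL hn'0]
  have hle : l ^ 2 * e ≤ e' / 4 := by
    nlinarith [mul_le_mul_of_nonneg_left he (sq_nonneg l), mul_le_mul_of_nonneg_right hlL he'0]
  have hL2 : 0 ≤ L ^ 2 * z' := mul_nonneg (sq_nonneg L) hz'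
  have hn'b : n' ≤ 5 * a + 3 * b + 5 * (L ^ 2 * z') := by linarith
  have he'b : e' ≤ 3 * a + 4 * b + 3 * (L ^ 2 * z') := by linarith
  nlinarith [mul_nonneg (sq_nonneg L) ha, mul_nonneg (sq_nonneg L) hb, mul_nonneg (sq_nonneg L) hL2,
    mul_le_mul_of_nonneg_left (add_le_add hn'b he'b) (sq_nonneg L)]

section Bresse

variable {L l : ℝ} {ν ζ η ν' ζ' η' : ℝ → ℝ}

theorem integral_h1_le_integral_bresse (hL : 0 < L) (hlL : l ^ 2 * L ^ 2 ≤ 1 / 4)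
    (hν : ∀ x ∈ Icc (0:ℝ) L, HasDerivAt ν (ν' x) x) (hν' : ContinuousOn ν' (Icc 0 L))
    (hζ : ∀ x ∈ Icc (0:ℝ) L, HasDerivAt ζ (ζ' x) x) (hζ' : ContinuousOn ζ' (Icc 0 L))
    (hη : ∀ x ∈ Icc (0:ℝ) L, HasDerivAt η (η' x) x) (hη' : ContinuousOn η' (Icc 0 L))
    (hν0 : ν 0 = 0) (hζ0 : ζ 0 = 0) (hη0 : η 0 = 0) :
    ∫ x in (0:ℝ)..L, (ν x ^ 2 + ν' x ^ 2 + ζ x ^ 2 + ζ' x ^ 2 + η x ^ 2 + η' x ^ 2)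
      ≤ 8 * (1 + L ^ 2) ^ 2 *
        ∫ x in (0:ℝ)..L, ((ν' x + ζ x + l * η x) ^ 2 + (η' x - l * ν x) ^ 2 + ζ' x ^ 2) := by
  have hνc : ContinuousOn ν (Icc 0 L) := fun x hx => (hν x hx).continuousAt.continuousWithinAt
  have hζc : ContinuousOn ζ (Icc 0 L) := fun x hx => (hζ x hx).continuousAt.continuousWithinAt
  have hηc : ContinuousOn η (Icc 0 L) := fun x hx => (hη x hx).continuousAt.continuousWithinAt
  have hint : ∀ g : ℝ → ℝ, ContinuousOn g (Icc 0 L) → IntervalIntegrable g volume 0 L :=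
    fun g hg => hg.intervalIntegrable_of_Icc hL.le
  have hsq : ∀ g : ℝ → ℝ, 0 ≤ ∫ x in (0:ℝ)..L, g x ^ 2 :=
    fun g => intervalIntegral.integral_nonneg hL.le fun _ _ => sq_nonneg _
  have hν'le : ∫ x in (0:ℝ)..L, ν' x ^ 2 ≤ 3 * (∫ x in (0:ℝ)..L, (ν' x + ζ x + l * η x) ^ 2)
      + 3 * (∫ x in (0:ℝ)..L, ζ x ^ 2) + 3 * l ^ 2 * ∫ x in (0:ℝ)..L, η x ^ 2 := by
    rw [← intervalIntegral.integral_const_mul, ← intervalIntegral.integral_const_mul,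
      ← intervalIntegral.integral_const_mul, ← intervalIntegral.integral_add,
      ← intervalIntegral.integral_add]
    · refine intervalIntegral.integral_mono_on hL.le (hint _ (by fun_prop)) (hint _ (by fun_prop))
        fun x _ => ?_
      nlinarith [sq_nonneg (ν' x + 2 * ζ x + l * η x), sq_nonneg (ν' x + ζ x + 2 * l * η x),
        sq_nonneg (ζ x - l * η x)]
    all_goals exact hint _ (by fun_prop)
  have hη'le : ∫ x in (0:ℝ)..L, η' x ^ 2 ≤ 2 * (∫ x in (0:ℝ)..L, (η' x - l * ν x) ^ 2)
      + 2 * l ^ 2 * ∫ x in (0:ℝ)..L, ν x ^ 2 := by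
    rw [← intervalIntegral.integral_const_mul, ← intervalIntegral.integral_const_mul,
      ← intervalIntegral.integral_add]
    · refine intervalIntegral.integral_mono_on hL.le (hint _ (by fun_prop)) (hint _ (by fun_prop))
        fun x _ => ?_
      nlinarith [sq_nonneg (η' x - 2 * l * ν x)]
    all_goals exact hint _ (by fun_prop)
  rw [intervalIntegral.integral_add, intervalIntegral.integral_add, intervalIntegral.integral_add,
    intervalIntegral.integral_add, intervalIntegral.integral_add, intervalIntegral.integral_add,
    intervalIntegral.integral_add]
  · exact sum_le_of_coupled_poincare
      (by simpa using integral_sq_le_sq_mul_integral_deriv_sq hL.le hν hν' hν0)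
      (by simpa using integral_sq_le_sq_mul_integral_deriv_sq hL.le hζ hζ' hζ0)
      (by simpa using integral_sq_le_sq_mul_integral_deriv_sq hL.le hη hη' hη0)
      hν'le hη'le hlL (hsq _) (hsq _) (hsq _) (hsq _) (hsq _)
  all_goals exact hint _ (by fun_prop)

theorem integral_bresse_energy_le {k σ lam : ℝ} (hL : 0 ≤ L) (hl : l ^ 2 ≤ 1)
    (hν : ContinuousOn ν (Icc 0 L)) (hν' : ContinuousOn ν' (Icc 0 L))
    (hζ : ContinuousOn ζ (Icc 0 L)) (hζ' : ContinuousOn ζ' (Icc 0 L))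
    (hη : ContinuousOn η (Icc 0 L)) (hη' : ContinuousOn η' (Icc 0 L)) :
    ∫ x in (0:ℝ)..L, ((k * (ν' x + ζ x + l * η x)) ^ 2 + (σ * (η' x - l * ν x)) ^ 2
        + (lam * ζ' x) ^ 2)
      ≤ (3 * k ^ 2 + 2 * σ ^ 2 + lam ^ 2) *
        ∫ x in (0:ℝ)..L, (ν x ^ 2 + ν' x ^ 2 + ζ x ^ 2 + ζ' x ^ 2 + η x ^ 2 + η' x ^ 2) := by
  rw [← intervalIntegral.integral_const_mul]
  refine intervalIntegral.integral_mono_on hL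
    ((by fun_prop : ContinuousOn _ _).intervalIntegrable_of_Icc hL)
    ((by fun_prop : ContinuousOn _ _).intervalIntegrable_of_Icc hL) fun x _ => ?_
  have hshear : (k * (ν' x + ζ x + l * η x)) ^ 2 ≤ 3 * k ^ 2 * (ν' x ^ 2 + ζ x ^ 2 + η x ^ 2) := by
    rw [mul_pow, mul_comm 3, mul_assoc]
    refine mul_le_mul_of_nonneg_left ?_ (sq_nonneg k)
    nlinarith [sq_nonneg (ν' x - ζ x), sq_nonneg (ν' x - l * η x), sq_nonneg (ζ x - l * η x),
      mul_le_mul_of_nonneg_right hl (sq_nonneg (η x))]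
  have haxial : (σ * (η' x - l * ν x)) ^ 2 ≤ 2 * σ ^ 2 * (η' x ^ 2 + ν x ^ 2) := by
    rw [mul_pow, mul_comm 2, mul_assoc]
    refine mul_le_mul_of_nonneg_left ?_ (sq_nonneg σ)
    nlinarith [sq_nonneg (η' x + l * ν x), mul_le_mul_of_nonneg_right hl (sq_nonneg (ν x))]
  nlinarith [mul_nonneg (sq_nonneg k) (add_nonneg (add_nonneg (sq_nonneg (ν x)) (sq_nonneg (ζ' x)))
      (sq_nonneg (η' x))),
    mul_nonneg (sq_nonneg σ) (add_nonneg (add_nonneg (sq_nonneg (ν' x)) (sq_nonneg (ζ x)))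
      (add_nonneg (sq_nonneg (ζ' x)) (sq_nonneg (η x)))),
    mul_nonneg (sq_nonneg lam) (add_nonneg (add_nonneg (sq_nonneg (ν x)) (sq_nonneg (ν' x)))
      (add_nonneg (add_nonneg (sq_nonneg (ζ x)) (sq_nonneg (η x))) (sq_nonneg (η' x))))]

theorem min_sq_mul_integral_le_integral_bresse_energy {k σ lam : ℝ} (hL : 0 ≤ L)
    (hν : ContinuousOn ν (Icc 0 L)) (hν' : ContinuousOn ν' (Icc 0 L))
    (hζ : ContinuousOn ζ (Icc 0 L)) (hζ' : ContinuousOn ζ' (Icc 0 L))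
    (hη : ContinuousOn η (Icc 0 L)) (hη' : ContinuousOn η' (Icc 0 L)) :
    min (k ^ 2) (min (σ ^ 2) (lam ^ 2)) *
        ∫ x in (0:ℝ)..L, ((ν' x + ζ x + l * η x) ^ 2 + (η' x - l * ν x) ^ 2 + ζ' x ^ 2)
      ≤ ∫ x in (0:ℝ)..L, ((k * (ν' x + ζ x + l * η x)) ^ 2 + (σ * (η' x - l * ν x)) ^ 2
        + (lam * ζ' x) ^ 2) := by
  rw [← intervalIntegral.integral_const_mul]
  refine intervalIntegral.integral_mono_on hL
    ((by fun_prop : ContinuousOn _ _).intervalIntegrable_of_Icc hL)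
    ((by fun_prop : ContinuousOn _ _).intervalIntegrable_of_Icc hL) fun x _ => ?_
  have hk : min (k ^ 2) (min (σ ^ 2) (lam ^ 2)) ≤ k ^ 2 := min_le_left _ _
  have hσ : min (k ^ 2) (min (σ ^ 2) (lam ^ 2)) ≤ σ ^ 2 :=
    (min_le_right _ _).trans (min_le_left _ _)
  have hlam : min (k ^ 2) (min (σ ^ 2) (lam ^ 2)) ≤ lam ^ 2 :=
    (min_le_right _ _).trans (min_le_right _ _)
  simp only [mul_pow]
  nlinarith [mul_le_mul_of_nonneg_right hk (sq_nonneg (ν' x + ζ x + l * η x)),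
    mul_le_mul_of_nonneg_right hσ (sq_nonneg (η' x - l * ν x)),
    mul_le_mul_of_nonneg_right hlam (sq_nonneg (ζ' x))]

end Bresse

/-- Equivalence of the Bresse energy norm
`‖Φ‖²_d = ‖k(ν' + ζ + lη)‖² + ‖σ(η' − lν)‖² + ‖λζ'‖²` with the standard `H¹` norm on
`(0, L)` for triples vanishing at both endpoints, with constants uniform in the
curvature `l ∈ [0, l₀]` for `l₀` small. -/
theorem stmt11 (L k σ lam : ℝ) (hL : 0 < L) (hk : 0 < k) (hσ : 0 < σ) (hlam : 0 < lam) :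
    ∃ l₀ > 0, ∃ c > 0, ∃ C > 0, ∀ l : ℝ, 0 ≤ l → l ≤ l₀ →
      ∀ ν ζ η ν' ζ' η' : ℝ → ℝ,
        (∀ x ∈ Icc (0:ℝ) L, HasDerivAt ν (ν' x) x) → ContinuousOn ν' (Icc 0 L) →
        (∀ x ∈ Icc (0:ℝ) L, HasDerivAt ζ (ζ' x) x) → ContinuousOn ζ' (Icc 0 L) →
        (∀ x ∈ Icc (0:ℝ) L, HasDerivAt η (η' x) x) → ContinuousOn η' (Icc 0 L) →
        ν 0 = 0 → ζ 0 = 0 → η 0 = 0 → ν L = 0 → ζ L = 0 → η L = 0 →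
        c * (∫ x in (0:ℝ)..L, ((ν x) ^ 2 + (ν' x) ^ 2 + (ζ x) ^ 2 + (ζ' x) ^ 2
              + (η x) ^ 2 + (η' x) ^ 2))
          ≤ (∫ x in (0:ℝ)..L, ((k * (ν' x + ζ x + l * η x)) ^ 2
              + (σ * (η' x - l * ν x)) ^ 2 + (lam * ζ' x) ^ 2)) ∧
        (∫ x in (0:ℝ)..L, ((k * (ν' x + ζ x + l * η x)) ^ 2
              + (σ * (η' x - l * ν x)) ^ 2 + (lam * ζ' x) ^ 2))
          ≤ C * (∫ x in (0:ℝ)..L, ((ν x) ^ 2 + (ν' x) ^ 2 + (ζ x) ^ 2 + (ζ' x) ^ 2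
              + (η x) ^ 2 + (η' x) ^ 2)) := by
  set m := min (k ^ 2) (min (σ ^ 2) (lam ^ 2))
  refine ⟨min 1 (1 / (2 * L)), by positivity, m / (8 * (1 + L ^ 2) ^ 2), by positivity,
    3 * k ^ 2 + 2 * σ ^ 2 + lam ^ 2, by positivity, ?_⟩
  intro l hl hll ν ζ η ν' ζ' η' hν hν' hζ hζ' hη hη' hν0 hζ0 hη0 _ _ _
  have hl1 : l ^ 2 ≤ 1 := pow_le_one₀ hl (hll.trans (min_le_left _ _))
  have hlL : l ^ 2 * L ^ 2 ≤ 1 / 4 := by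
    have : l * (2 * L) ≤ 1 := (le_div_iff₀ (by positivity)).1 (hll.trans (min_le_right _ _))
    nlinarith [mul_nonneg hl hL.le]
  have hνc : ContinuousOn ν (Icc 0 L) := fun x hx => (hν x hx).continuousAt.continuousWithinAt
  have hζc : ContinuousOn ζ (Icc 0 L) := fun x hx => (hζ x hx).continuousAt.continuousWithinAt
  have hηc : ContinuousOn η (Icc 0 L) := fun x hx => (hη x hx).continuousAt.continuousWithinAt
  refine ⟨?_, integral_bresse_energy_le hL.le hl1 hνc hν' hζc hζ' hηc hη'⟩
  calc m / (8 * (1 + L ^ 2) ^ 2) * _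
      ≤ m / (8 * (1 + L ^ 2) ^ 2) * (8 * (1 + L ^ 2) ^ 2 *
          ∫ x in (0:ℝ)..L, ((ν' x + ζ x + l * η x) ^ 2 + (η' x - l * ν x) ^ 2 + ζ' x ^ 2)) := by
        gcongr
        exact integral_h1_le_integral_bresse hL hlL hν hν' hζ hζ' hη hη' hν0 hζ0 hη0
    _ = m * ∫ x in (0:ℝ)..L, ((ν' x + ζ x + l * η x) ^ 2 + (η' x - l * ν x) ^ 2 + ζ' x ^ 2) := by
        field_simp
    _ ≤ _ := min_sq_mul_integral_le_integral_bresse_energy hL.le hνc hν' hζc hζ' hηc hη'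
end
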